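/- arXiv:2509.06563 — 2 statements merged into one kernel-verified Lean document; each statement's English description precedes it below -/
import Mathlib

section
/- Let (a,b,c) ∈ ℝ³. There exists a horizontal future-directed causal Lipschitz curve γ : [0,1] → ℝ³ with γ(0) = (0,0,0) and γ(1) = (a,b,c) if and only if a > 0 and −a² + b² + 4|c| ≤ 0. (Equivalently, the causal future of the origin in the sub-Lorentzian Heisenberg group is {(x,y,z) : x ≥ 0 and −x² + y² + 4|z| ≤ 0}.) -/
open MeasureTheory Set

/-- `γ` is Lipschitz on `[0,1]`. -/
def IsLipCurve3 (γ : ℝ → ℝ × ℝ × ℝ) : Prop :=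
  ∃ K, LipschitzOnWith K γ (Icc (0:ℝ) 1)

/-- A curve in the Heisenberg group is horizontal if, for almost every `t ∈ [0,1]`,
`γ₃'(t) = (γ₁(t)γ₂'(t) − γ₁'(t)γ₂(t))/2`. -/
def Horizontal (γ : ℝ → ℝ × ℝ × ℝ) : Prop :=
  ∀ᵐ t ∂(volume.restrict (Icc (0:ℝ) 1)),
    deriv (fun s => (γ s).2.2) t =
      ((γ t).1 * deriv (fun s => (γ s).2.1) t -
        deriv (fun s => (γ s).1) t * (γ t).2.1) / 2

/-- A horizontal curve is future-directed causal if, for almost every `t ∈ [0,1]`,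
`γ₁'(t) ≥ |γ₂'(t)|` and `γ₁'(t) > 0`. -/
def IsFDCausal3 (γ : ℝ → ℝ × ℝ × ℝ) : Prop :=
  ∀ᵐ t ∂(volume.restrict (Icc (0:ℝ) 1)),
    |deriv (fun s => (γ s).2.1) t| ≤ deriv (fun s => (γ s).1) t ∧
      0 < deriv (fun s => (γ s).1) t

/-- A horizontal curve is future-directed timelike if, for almost every `t ∈ [0,1]`,
`γ₁'(t) > |γ₂'(t)|`. -/
def IsFDTimelike3 (γ : ℝ → ℝ × ℝ × ℝ) : Prop :=
  ∀ᵐ t ∂(volume.restrict (Icc (0:ℝ) 1)),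
    |deriv (fun s => (γ s).2.1) t| < deriv (fun s => (γ s).1) t

/-- The Lorentzian length of a (causal) curve. -/
noncomputable def lorLength3 (γ : ℝ → ℝ × ℝ × ℝ) : ℝ :=
  ∫ t in (0:ℝ)..1,
    Real.sqrt ((deriv (fun s => (γ s).1) t)^2 - (deriv (fun s => (γ s).2.1) t)^2)

/-- The sub-Riemannian length of a horizontal curve. -/
noncomputable def sRLength3 (γ : ℝ → ℝ × ℝ × ℝ) : ℝ :=
  ∫ t in (0:ℝ)..1,
    Real.sqrt ((deriv (fun s => (γ s).1) t)^2 + (deriv (fun s => (γ s).2.1) t)^2)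

/-- Admissible (horizontal future-directed causal Lipschitz) curves from `p` to `q`. -/
def AdmCurve (p q : ℝ × ℝ × ℝ) (γ : ℝ → ℝ × ℝ × ℝ) : Prop :=
  IsLipCurve3 γ ∧ Horizontal γ ∧ IsFDCausal3 γ ∧ γ 0 = p ∧ γ 1 = q

/-- Causal precedence: `p ≤ q`. -/
def CausalLE (p q : ℝ × ℝ × ℝ) : Prop :=
  p = q ∨ ∃ γ, AdmCurve p q γ

/-- The causal diamond `J(p,q)`. -/
def causalDiamond (p q : ℝ × ℝ × ℝ) : Set (ℝ × ℝ × ℝ) :=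
  {r | CausalLE p r ∧ CausalLE r q}

/-- The time separation function `τ` (equal to `0`, by convention on real `sSup`,
if there is no admissible curve). -/
noncomputable def timeSep (p q : ℝ × ℝ × ℝ) : ℝ :=
  sSup (lorLength3 '' {γ | AdmCurve p q γ})

/-- The sub-Riemannian distance. -/
noncomputable def sRDist (p q : ℝ × ℝ × ℝ) : ℝ :=
  sInf (sRLength3 '' {γ | IsLipCurve3 γ ∧ Horizontal γ ∧ γ 0 = p ∧ γ 1 = q})

/-!
Along a horizontal curve `γ = (x, y, z)` the function `x² - y² - 4z` has derivative
`2 (x + y) (x' - y')`. For a future-directed causal curve both factors are nonnegative, the first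
because `x + y` is nondecreasing and vanishes at the origin; since Lipschitz curves are absolutely
continuous, the fundamental theorem of calculus turns this into `b² + 4c ≤ a²`, and `a > 0`
because `x' > 0`. The automorphism `(x, y, z) ↦ (x, -y, -z)` changes the sign of `c`.

Conversely, for `c ≥ 0` the point `(a, b, c)` is reached by a broken horizontal line: first along
the null direction `(1, -1)` up to a switch time `t₀`, then with a constant causal velocity.
-/

open scoped NNReal Topology

namespace AbsolutelyContinuousOnInterval

variable {f : ℝ → ℝ} {a b : ℝ}

theorem monotoneOn_of_ae_deriv_nonneg (hf : AbsolutelyContinuousOnInterval f a b)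
    (hd : ∀ᵐ t ∂volume.restrict (Icc a b), 0 ≤ deriv f t) : MonotoneOn f (Icc a b) := by
  intro u hu v hv huv
  have hsub : Icc u v ⊆ Icc a b := Icc_subset_Icc hu.1 hv.2
  have hfuv : AbsolutelyContinuousOnInterval f u v :=
    hf.mono (by rwa [uIcc_of_le huv, uIcc_of_le (hu.1.trans hu.2)])
  rw [← sub_nonneg, ← hfuv.integral_deriv_eq_sub]
  exact intervalIntegral.integral_nonneg_of_ae_restrict huv
    (ae_restrict_of_ae_restrict_of_subset hsub hd)

theorem lt_of_ae_deriv_pos (hf : AbsolutelyContinuousOnInterval f a b) (hab : a < b)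
    (hd : ∀ᵐ t ∂volume.restrict (Icc a b), 0 < deriv f t) : f a < f b := by
  rw [← sub_pos, ← hf.integral_deriv_eq_sub]
  have hIoc : ∀ᵐ t ∂volume.restrict (Ioc a b), 0 < deriv f t :=
    ae_restrict_of_ae_restrict_of_subset Ioc_subset_Icc_self hd
  have hpos : volume.restrict (Ioc a b) {t | 0 < deriv f t} ≠ 0 := by
    rw [measure_congr (ae_eq_univ.2 (ae_iff.1 hIoc) : {t | 0 < deriv f t} =ᵐ[_] univ),
      Measure.restrict_apply_univ, Real.volume_Ioc]
    simpa using hab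
  simpa using intervalIntegral.integral_lt_integral_of_ae_le_of_measure_setOfPred_lt_ne_zero
    hab.le intervalIntegrable_const hf.intervalIntegrable_deriv (hIoc.mono fun t ht => ht.le) hpos

theorem ae_restrict_differentiableAt (hf : AbsolutelyContinuousOnInterval f a b) (hab : a ≤ b) :
    ∀ᵐ t ∂volume.restrict (Icc a b), DifferentiableAt ℝ f t := by
  rw [ae_restrict_iff' measurableSet_Icc, ← uIcc_of_le hab]
  exact hf.ae_differentiableAt

end AbsolutelyContinuousOnInterval

theorem LipschitzWith.ite_le {E : Type*} [PseudoMetricSpace E] {f g : ℝ → E} {K : ℝ≥0}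
    {t₀ : ℝ} (hf : LipschitzWith K f) (hg : LipschitzWith K g) (h : f t₀ = g t₀) :
    LipschitzWith K (fun t => if t ≤ t₀ then f t else g t) := by
  refine LipschitzWith.of_dist_le_mul fun s t => ?_
  wlog hst : s ≤ t generalizing s t
  · rw [dist_comm, dist_comm s]
    exact this t s (le_of_not_ge hst)
  by_cases ht : t ≤ t₀
  · simpa [hst.trans ht, ht] using hf.dist_le_mul s t
  by_cases hs : s ≤ t₀
  · simp only [hs, ht, if_true, if_false]
    calc dist (f s) (g t) ≤ dist (f s) (f t₀) + dist (g t₀) (g t) := by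
          rw [h]; exact dist_triangle _ _ _
      _ ≤ K * dist s t₀ + K * dist t₀ t := add_le_add (hf.dist_le_mul _ _) (hg.dist_le_mul _ _)
      _ = K * dist s t := by
          rw [Real.dist_eq, Real.dist_eq, Real.dist_eq, abs_of_nonpos (by linarith),
            abs_of_nonpos (by linarith), abs_of_nonpos (by linarith)]
          ring
  · simpa [hs, ht] using hg.dist_le_mul s t

section Affine

variable {E : Type*} [NormedAddCommGroup E] [NormedSpace ℝ E]

theorem lipschitzWith_add_sub_smul (p w : E) (t₀ : ℝ) :
    LipschitzWith ‖w‖₊ (fun t : ℝ => p + (t - t₀) • w) :=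
  LipschitzWith.of_dist_le_mul fun s t => by
    rw [dist_add_left, dist_eq_norm, ← sub_smul, sub_sub_sub_cancel_right, norm_smul,
      Real.dist_eq, Real.norm_eq_abs, mul_comm]
    rfl

theorem hasDerivAt_add_sub_smul (p w : E) (t₀ t : ℝ) :
    HasDerivAt (fun t : ℝ => p + (t - t₀) • w) w t := by
  simpa using (((hasDerivAt_id t).sub_const t₀).smul_const w).const_add p

end Affine

section Prod

variable {𝕜 E F : Type*} [NontriviallyNormedField 𝕜] [NormedAddCommGroup E] [NormedSpace 𝕜 E]
  [NormedAddCommGroup F] [NormedSpace 𝕜 F] {γ : 𝕜 → E × F} {v : E × F} {t : 𝕜}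

theorem HasDerivAt.fst (h : HasDerivAt γ v t) : HasDerivAt (fun s => (γ s).1) v.1 t :=
  hasFDerivAt_fst.comp_hasDerivAt (f := γ) t h

theorem HasDerivAt.snd (h : HasDerivAt γ v t) : HasDerivAt (fun s => (γ s).2) v.2 t :=
  hasFDerivAt_snd.comp_hasDerivAt (f := γ) t h

end Prod

namespace IsLipCurve3

variable {γ : ℝ → ℝ × ℝ × ℝ}

theorem absolutelyContinuousOnInterval_comp (hγ : IsLipCurve3 γ) {φ : ℝ × ℝ × ℝ → ℝ} {L : ℝ≥0}
    (hφ : LipschitzWith L φ) : AbsolutelyContinuousOnInterval (fun t => φ (γ t)) 0 1 := by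
  obtain ⟨K, hK⟩ := hγ
  rw [← uIcc_of_le zero_le_one] at hK
  exact (hφ.comp_lipschitzOnWith hK).absolutelyContinuousOnInterval

theorem absolutelyContinuousOnInterval_fst (hγ : IsLipCurve3 γ) :
    AbsolutelyContinuousOnInterval (fun t => (γ t).1) 0 1 :=
  hγ.absolutelyContinuousOnInterval_comp (φ := fun p => p.1) LipschitzWith.prod_fst

theorem absolutelyContinuousOnInterval_snd_fst (hγ : IsLipCurve3 γ) :
    AbsolutelyContinuousOnInterval (fun t => (γ t).2.1) 0 1 :=
  hγ.absolutelyContinuousOnInterval_comp (φ := fun p => p.2.1)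
    (LipschitzWith.prod_fst.comp LipschitzWith.prod_snd)

theorem absolutelyContinuousOnInterval_snd_snd (hγ : IsLipCurve3 γ) :
    AbsolutelyContinuousOnInterval (fun t => (γ t).2.2) 0 1 :=
  hγ.absolutelyContinuousOnInterval_comp (φ := fun p => p.2.2)
    (LipschitzWith.prod_snd.comp LipschitzWith.prod_snd)

end IsLipCurve3

theorem hasDerivAt_sq_sub_sq_sub_four_mul {x y z : ℝ → ℝ} {t : ℝ} (hx : DifferentiableAt ℝ x t)
    (hy : DifferentiableAt ℝ y t) (hz : DifferentiableAt ℝ z t)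
    (hH : deriv z t = (x t * deriv y t - deriv x t * y t) / 2) :
    HasDerivAt (fun s => x s ^ 2 - y s ^ 2 - 4 * z s)
      (2 * (x t + y t) * (deriv x t - deriv y t)) t := by
  refine (((hx.hasDerivAt.pow 2).sub (hy.hasDerivAt.pow 2)).sub
    (hz.hasDerivAt.const_mul 4)).congr_deriv ?_
  rw [hH]
  ring

def heisReflect (p : ℝ × ℝ × ℝ) : ℝ × ℝ × ℝ := (p.1, -p.2.1, -p.2.2)

@[simp]
theorem heisReflect_mk (x y z : ℝ) : heisReflect (x, y, z) = (x, -y, -z) := rfl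

@[simp]
theorem heisReflect_zero : heisReflect 0 = 0 := by simp [heisReflect]

theorem lipschitzWith_heisReflect : LipschitzWith 1 heisReflect :=
  LipschitzWith.of_dist_le_mul fun p q => by simp [heisReflect, Prod.dist_eq, dist_neg_neg]

def IsHorizontalVec (p w : ℝ × ℝ × ℝ) : Prop := w.2.2 = (p.1 * w.2.1 - w.1 * p.2.1) / 2

def IsFDCausalVec (w : ℝ × ℝ × ℝ) : Prop := |w.2.1| ≤ w.1 ∧ 0 < w.1

theorem IsHorizontalVec.add_smul {p w : ℝ × ℝ × ℝ} (h : IsHorizontalVec p w) (s : ℝ) :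
    IsHorizontalVec (p + s • w) w := by
  unfold IsHorizontalVec at *
  simp only [Prod.fst_add, Prod.snd_add, Prod.smul_fst, Prod.smul_snd, smul_eq_mul, h]
  ring

noncomputable def brokenLine (p w₁ w₂ : ℝ × ℝ × ℝ) (t₀ t : ℝ) : ℝ × ℝ × ℝ :=
  if t ≤ t₀ then p + (t - t₀) • w₁ else p + (t - t₀) • w₂

namespace AdmCurve

variable {γ : ℝ → ℝ × ℝ × ℝ} {p q : ℝ × ℝ × ℝ} {a b c : ℝ}

theorem map_heisReflect (hγ : AdmCurve p q γ) :
    AdmCurve (heisReflect p) (heisReflect q) (fun t => heisReflect (γ t)) := by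
  obtain ⟨⟨K, hK⟩, hHor, hCaus, h0, h1⟩ := hγ
  refine ⟨⟨1 * K, lipschitzWith_heisReflect.comp_lipschitzOnWith hK⟩, ?_, ?_,
    congrArg heisReflect h0, congrArg heisReflect h1⟩
  · filter_upwards [hHor] with t ht
    simp only [heisReflect, deriv.fun_neg, ht]
    ring
  · filter_upwards [hCaus] with t ht
    simpa only [heisReflect, deriv.fun_neg, abs_neg] using ht

theorem pos (hγ : AdmCurve 0 (a, b, c) γ) : 0 < a := by
  obtain ⟨hLip, -, hCaus, h0, h1⟩ := hγ
  simpa [h0, h1] using hLip.absolutelyContinuousOnInterval_fst.lt_of_ae_deriv_pos zero_lt_one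
    (hCaus.mono fun t ht => ht.2)

theorem monotoneOn_fst_add_snd (hγ : AdmCurve p q γ) :
    MonotoneOn (fun t => (γ t).1 + (γ t).2.1) (Icc 0 1) := by
  obtain ⟨hLip, -, hCaus, -, -⟩ := hγ
  have hx := hLip.absolutelyContinuousOnInterval_fst
  have hy := hLip.absolutelyContinuousOnInterval_snd_fst
  refine (hx.fun_add hy).monotoneOn_of_ae_deriv_nonneg ?_
  filter_upwards [hx.ae_restrict_differentiableAt zero_le_one,
    hy.ae_restrict_differentiableAt zero_le_one, hCaus] with t htx hty hC
  rw [deriv_fun_add htx hty]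
  linarith [neg_abs_le (deriv (fun s => (γ s).2.1) t)]

theorem monotoneOn_sq_sub_sq_sub_four_mul (hγ : AdmCurve 0 q γ) :
    MonotoneOn (fun t => (γ t).1 ^ 2 - (γ t).2.1 ^ 2 - 4 * (γ t).2.2) (Icc 0 1) := by
  have hmono := hγ.monotoneOn_fst_add_snd
  obtain ⟨hLip, hHor, hCaus, h0, -⟩ := hγ
  have hxy : ∀ t ∈ Icc (0 : ℝ) 1, 0 ≤ (γ t).1 + (γ t).2.1 := fun t ht => by
    simpa [h0] using hmono (left_mem_Icc.2 zero_le_one) ht ht.1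
  have hx := hLip.absolutelyContinuousOnInterval_fst
  have hy := hLip.absolutelyContinuousOnInterval_snd_fst
  have hz := hLip.absolutelyContinuousOnInterval_snd_snd
  have hη := ((hx.fun_mul hx).fun_sub (hy.fun_mul hy)).fun_sub (hz.const_mul 4)
  simp only [← sq] at hη
  refine hη.monotoneOn_of_ae_deriv_nonneg ?_
  filter_upwards [hx.ae_restrict_differentiableAt zero_le_one,
    hy.ae_restrict_differentiableAt zero_le_one, hz.ae_restrict_differentiableAt zero_le_one,
    hHor, hCaus, ae_restrict_mem measurableSet_Icc] with t htx hty htz hH hC ht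
  rw [(hasDerivAt_sq_sub_sq_sub_four_mul htx hty htz hH).deriv]
  have := le_abs_self (deriv (fun s => (γ s).2.1) t)
  exact mul_nonneg (mul_nonneg zero_le_two (hxy t ht)) (by linarith)

theorem sq_add_four_mul_le (hγ : AdmCurve 0 (a, b, c) γ) : b ^ 2 + 4 * c ≤ a ^ 2 := by
  have := hγ.monotoneOn_sq_sub_sq_sub_four_mul (left_mem_Icc.2 zero_le_one)
    (right_mem_Icc.2 zero_le_one) zero_le_one
  obtain ⟨-, -, -, h0, h1⟩ := hγ
  simp only [h0, h1, Prod.fst_zero, Prod.snd_zero] at this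
  linarith

theorem of_ae_hasDerivAt (hγ : IsLipCurve3 γ)
    (hv : ∀ᵐ t ∂volume.restrict (Icc 0 1),
      ∃ v, HasDerivAt γ v t ∧ IsHorizontalVec (γ t) v ∧ IsFDCausalVec v)
    (h0 : γ 0 = p) (h1 : γ 1 = q) : AdmCurve p q γ := by
  refine ⟨hγ, ?_, ?_, h0, h1⟩
  · filter_upwards [hv] with t ht
    obtain ⟨v, hd, hH, -⟩ := ht
    rw [hd.fst.deriv, hd.snd.fst.deriv, hd.snd.snd.deriv]
    exact hH
  · filter_upwards [hv] with t ht
    obtain ⟨v, hd, -, hC⟩ := ht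
    rw [hd.fst.deriv, hd.snd.fst.deriv]
    exact hC

end AdmCurve

theorem admCurve_brokenLine {p w₁ w₂ : ℝ × ℝ × ℝ} {t₀ : ℝ} (ht₀ : t₀ ∈ Icc (0 : ℝ) 1)
    (hH₁ : IsHorizontalVec p w₁) (hH₂ : IsHorizontalVec p w₂)
    (hC₁ : IsFDCausalVec w₁) (hC₂ : IsFDCausalVec w₂) :
    AdmCurve (p - t₀ • w₁) (p + (1 - t₀) • w₂) (brokenLine p w₁ w₂ t₀) := by
  refine AdmCurve.of_ae_hasDerivAt ?_ ?_ ?_ ?_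
  · refine ⟨max ‖w₁‖₊ ‖w₂‖₊, (LipschitzWith.ite_le ?_ ?_ (by simp)).lipschitzOnWith⟩
    · exact (lipschitzWith_add_sub_smul p w₁ t₀).weaken (le_max_left _ _)
    · exact (lipschitzWith_add_sub_smul p w₂ t₀).weaken (le_max_right _ _)
  · filter_upwards [ae_restrict_of_ae (volume.ae_ne t₀)] with t ht
    rcases ht.lt_or_gt with ht | ht
    · have heq : brokenLine p w₁ w₂ t₀ =ᶠ[𝓝 t] fun s => p + (s - t₀) • w₁ := by
        filter_upwards [Iic_mem_nhds ht] with s hs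
        simp [brokenLine, mem_Iic.1 hs]
      refine ⟨w₁, (hasDerivAt_add_sub_smul p w₁ t₀ t).congr_of_eventuallyEq heq, ?_, hC₁⟩
      rw [heq.eq_of_nhds]
      exact hH₁.add_smul _
    · have heq : brokenLine p w₁ w₂ t₀ =ᶠ[𝓝 t] fun s => p + (s - t₀) • w₂ := by
        filter_upwards [Ioi_mem_nhds ht] with s hs
        simp [brokenLine, not_le.2 (mem_Ioi.1 hs)]
      refine ⟨w₂, (hasDerivAt_add_sub_smul p w₂ t₀ t).congr_of_eventuallyEq heq, ?_, hC₂⟩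
      rw [heq.eq_of_nhds]
      exact hH₂.add_smul _
  · simp [brokenLine, ht₀.1, sub_eq_add_neg]
  · rcases ht₀.2.eq_or_lt with rfl | ht₁
    · simp [brokenLine]
    · simp [brokenLine, not_le.2 ht₁]

theorem exists_switch_time_of_sq_add_four_mul_le {a b c : ℝ} (ha : 0 < a) (hc : 0 ≤ c)
    (h : b ^ 2 + 4 * c ≤ a ^ 2) :
    ∃ t₀ v, t₀ ∈ Ico (0 : ℝ) 1 ∧ |v| ≤ a ∧
      b = -t₀ * a + (1 - t₀) * v ∧ c = t₀ * (1 - t₀) * a * (v + a) / 2 := by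
  have hab : 0 ≤ a + b := by nlinarith
  rcases hab.eq_or_lt with hab | hab
  · refine ⟨0, b, ⟨le_rfl, zero_lt_one⟩, by rw [abs_le]; constructor <;> linarith, by ring, ?_⟩
    nlinarith
  -- the endpoint equations force `c = t₀ a (a + b) / 2`
  set t₀ := 2 * c / (a * (a + b)) with ht₀
  have hpos : 0 < a * (a + b) := by positivity
  have ht₀a : t₀ * (a * (a + b)) = 2 * c := div_mul_cancel₀ _ hpos.ne'
  have ht₀1 : t₀ < 1 := by
    rw [ht₀, div_lt_one hpos]
    nlinarith
  have ht₀0 : 0 ≤ t₀ := div_nonneg (by linarith) hpos.le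
  have hs : 0 < 1 - t₀ := by linarith
  clear_value t₀
  refine ⟨t₀, (b + t₀ * a) / (1 - t₀), ⟨ht₀0, ht₀1⟩, ?_, ?_, ?_⟩
  · rw [abs_le, le_div_iff₀ hs, div_le_iff₀ hs]
    constructor <;> nlinarith
  · field_simp
    ring
  · field_simp
    linear_combination -ht₀a

theorem exists_admCurve_of_sq_add_four_mul_le {a b c : ℝ} (ha : 0 < a) (hc : 0 ≤ c)
    (h : b ^ 2 + 4 * c ≤ a ^ 2) : ∃ γ, AdmCurve 0 (a, b, c) γ := by
  obtain ⟨t₀, v, ht₀, hv, rfl, rfl⟩ := exists_switch_time_of_sq_add_four_mul_le ha hc h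
  let w₁ : ℝ × ℝ × ℝ := (a, -a, 0)
  let w₂ : ℝ × ℝ × ℝ := (a, v, t₀ * a * (v + a) / 2)
  have hγ := admCurve_brokenLine (p := t₀ • w₁) (w₁ := w₁) (w₂ := w₂) (Ico_subset_Icc_self ht₀)
    (by simp [IsHorizontalVec, w₁]; ring) (by simp [IsHorizontalVec, w₁, w₂]; ring)
    ⟨by simp [w₁, abs_of_pos ha], ha⟩ ⟨hv, ha⟩
  have hend : t₀ • w₁ + (1 - t₀) • w₂ =
      (a, -t₀ * a + (1 - t₀) * v, t₀ * (1 - t₀) * a * (v + a) / 2) := by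
    simp only [w₁, w₂, Prod.smul_mk, Prod.mk_add_mk, smul_eq_mul, Prod.mk.injEq]
    refine ⟨by ring, by ring, by ring⟩
  rw [sub_self, hend] at hγ
  exact ⟨_, hγ⟩

/-- the causal future of the origin of the sub-Lorentzian Heisenberg
group is `{(x,y,z) : x ≥ 0 and −x² + y² + 4|z| ≤ 0}`; equivalently, a point
`(a,b,c) ≠ 0` is reachable from the origin by a horizontal future-directed causal
Lipschitz curve iff `a > 0` and `−a² + b² + 4|c| ≤ 0`. -/
theorem exists_causal_curve_heisenberg_iff (a b c : ℝ) :
    (∃ γ : ℝ → ℝ × ℝ × ℝ, IsLipCurve3 γ ∧ Horizontal γ ∧ IsFDCausal3 γ ∧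
      γ 0 = (0, 0, 0) ∧ γ 1 = (a, b, c)) ↔
    (0 < a ∧ -a^2 + b^2 + 4 * |c| ≤ 0) := by
  change (∃ γ, AdmCurve 0 (a, b, c) γ) ↔ _
  constructor
  · rintro ⟨γ, hγ⟩
    have hγ' : AdmCurve 0 (a, -b, -c) (fun t => heisReflect (γ t)) := by
      simpa using hγ.map_heisReflect
    refine ⟨hγ.pos, ?_⟩
    rcases abs_cases c with ⟨hc, -⟩ | ⟨hc, -⟩ <;>
      linarith [hγ.sq_add_four_mul_le, hγ'.sq_add_four_mul_le, neg_sq b]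
  · rintro ⟨ha, h⟩
    rcases le_total 0 c with hc | hc
    · exact exists_admCurve_of_sq_add_four_mul_le ha hc (by linarith [le_abs_self c])
    · obtain ⟨γ, hγ⟩ := exists_admCurve_of_sq_add_four_mul_le (b := -b) (c := -c) ha
        (by linarith) (by linarith [neg_abs_le c, neg_sq b])
      exact ⟨_, by simpa using hγ.map_heisReflect⟩
end

section
/- Let (a,b,c) ∈ ℝ³ with a ≥ 0. Then the causal diamond satisfies J((0,0,0),(a,b,c)) ⊆ [−a,a] × [−a,a] × [−a²,a²]. Moreover, every horizontal Lipschitz curve γ : [0,1] → ℝ³ with γ(0) = (0,0,0) and γ(1) = (a,b,c) has sub-Riemannian length at least √(a² + b²); consequently J((0,0,0),(a,b,c)) ⊆ [−d,d] × [−d,d] × [−d²,d²] where d = d((0,0,0),(a,b,c)) is the sub-Riemannian distance. -/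
/-!
Along a causal curve from the origin, integrating `|γ₂'| ≤ γ₁'` gives `|γ₂| ≤ γ₁ ≤ a`, and then
horizontality gives `|γ₃'| ≤ (γ₁ |γ₂'| + γ₁' |γ₂|) / 2 ≤ a γ₁'`, which integrates to `|γ₃| ≤ a²`.
For the length, `a² + b² = ∫ (a γ₁' + b γ₂')` is at most `√(a² + b²)` times the length by
Cauchy–Schwarz. Both use the fundamental theorem of calculus for Lipschitz, hence absolutely
continuous, functions. Finally `a ≤ √(a² + b²) ≤ d`, where the infimum defining `d` is over a
nonempty set because an explicit polynomial horizontal curve joins the origin to `(a, b, c)`.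
-/

open MeasureTheory Set

/-- The anisotropic box `[-r,r] × [-r,r] × [-r²,r²]`. -/
def heisBox (r : ℝ) : Set (ℝ × ℝ × ℝ) :=
  Icc (-r) r ×ˢ Icc (-r) r ×ˢ Icc (-(r^2)) (r^2)

open Filter

theorem AbsolutelyContinuousOnInterval.abs_sub_le_sub_of_abs_deriv_le {f g : ℝ → ℝ} {s t : ℝ}
    (hst : s ≤ t) (hf : AbsolutelyContinuousOnInterval f s t)
    (hg : AbsolutelyContinuousOnInterval g s t)
    (h : ∀ᵐ u ∂volume.restrict (Icc s t), |deriv g u| ≤ deriv f u) :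
    |g t - g s| ≤ f t - f s := by
  rw [← hf.integral_deriv_eq_sub, ← hg.integral_deriv_eq_sub]
  calc |∫ u in s..t, deriv g u| ≤ ∫ u in s..t, |deriv g u| :=
        intervalIntegral.abs_integral_le_integral_abs hst
    _ ≤ ∫ u in s..t, deriv f u :=
        intervalIntegral.integral_mono_ae_restrict hst hg.intervalIntegrable_deriv.abs
          hf.intervalIntegrable_deriv h

lemma mul_add_mul_le_sqrt_mul_sqrt (a b x y : ℝ) :
    a * x + b * y ≤ √(a ^ 2 + b ^ 2) * √(x ^ 2 + y ^ 2) := by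
  rw [← Real.sqrt_mul (by positivity)]
  exact (le_abs_self _).trans
    (Real.abs_le_sqrt (by nlinarith [sq_nonneg (a * y - b * x)]))

lemma abs_sub_mul_le_of_abs_le {x y x' y' X : ℝ} (hx : 0 ≤ x) (hxX : x ≤ X) (hy : |y| ≤ x)
    (hy' : |y'| ≤ x') : |x * y' - x' * y| ≤ 2 * X * x' := by
  have hx' : 0 ≤ x' := (abs_nonneg _).trans hy'
  calc |x * y' - x' * y| ≤ x * |y'| + x' * |y| := by
        simpa [abs_mul, abs_of_nonneg hx, abs_of_nonneg hx'] using abs_sub (x * y') (x' * y)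
    _ ≤ x * x' + x' * x := by gcongr
    _ ≤ 2 * X * x' := by nlinarith

lemma mem_heisBox_iff {p : ℝ × ℝ × ℝ} {r : ℝ} :
    p ∈ heisBox r ↔ |p.1| ≤ r ∧ |p.2.1| ≤ r ∧ |p.2.2| ≤ r ^ 2 := by
  simp only [heisBox, mem_prod, mem_Icc, abs_le]

lemma heisBox_mono {r s : ℝ} (h : r ≤ s) : heisBox r ⊆ heisBox s := by
  intro p hp
  rw [mem_heisBox_iff] at hp ⊢
  obtain ⟨h1, h2, h3⟩ := hp
  have hr : 0 ≤ r := (abs_nonneg _).trans h1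
  exact ⟨h1.trans h, h2.trans h, h3.trans (pow_le_pow_left₀ hr h 2)⟩

namespace IsLipCurve3

variable {γ : ℝ → ℝ × ℝ × ℝ}

lemma of_contDiff (h : ContDiff ℝ 1 γ) : IsLipCurve3 γ :=
  h.locallyLipschitz.locallyLipschitzOn.exists_lipschitzOnWith_of_compact isCompact_Icc

lemma absolutelyContinuousOnInterval_comp_s13 (hγ : IsLipCurve3 γ) {π : ℝ × ℝ × ℝ → ℝ}
    {K : NNReal} (hπ : LipschitzWith K π) {s t : ℝ} (hs : s ∈ Icc (0 : ℝ) 1)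
    (ht : t ∈ Icc (0 : ℝ) 1) : AbsolutelyContinuousOnInterval (fun u => π (γ u)) s t := by
  obtain ⟨L, hL⟩ := hγ
  exact ((hπ.comp_lipschitzOnWith hL).mono (uIcc_subset_Icc hs ht)).absolutelyContinuousOnInterval

end IsLipCurve3

section Curve

variable {γ : ℝ → ℝ × ℝ × ℝ}

theorem IsLipCurve3.sqrt_le_sRLength3 (hγ : IsLipCurve3 γ) :
    √(((γ 1).1 - (γ 0).1) ^ 2 + ((γ 1).2.1 - (γ 0).2.1) ^ 2) ≤ sRLength3 γ := by
  set x := fun s => (γ s).1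
  set y := fun s => (γ s).2.1
  set D := √((x 1 - x 0) ^ 2 + (y 1 - y 0) ^ 2)
  have hx : AbsolutelyContinuousOnInterval x 0 1 :=
    hγ.absolutelyContinuousOnInterval_comp_s13 LipschitzWith.prod_fst (by simp) (by simp)
  have hy : AbsolutelyContinuousOnInterval y 0 1 :=
    hγ.absolutelyContinuousOnInterval_comp_s13 (LipschitzWith.prod_fst.comp LipschitzWith.prod_snd)
      (by simp) (by simp)
  have hx' := hx.intervalIntegrable_deriv
  have hy' := hy.intervalIntegrable_deriv
  have hspeed : IntervalIntegrable (fun u => √(deriv x u ^ 2 + deriv y u ^ 2)) volume 0 1 := by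
    refine (hx'.abs.add hy'.abs).mono_fun' (by fun_prop) (Eventually.of_forall fun u => ?_)
    simp only [Real.norm_of_nonneg (Real.sqrt_nonneg _)]
    refine Real.sqrt_le_iff.mpr ⟨by positivity, ?_⟩
    nlinarith [sq_abs (deriv x u), sq_abs (deriv y u), abs_nonneg (deriv x u),
      abs_nonneg (deriv y u)]
  have hL : 0 ≤ sRLength3 γ :=
    intervalIntegral.integral_nonneg zero_le_one fun u _ => Real.sqrt_nonneg _
  have hD : D ^ 2 ≤ D * sRLength3 γ :=
    calc D ^ 2 = (x 1 - x 0) * (x 1 - x 0) + (y 1 - y 0) * (y 1 - y 0) := by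
          rw [Real.sq_sqrt (by positivity)]; ring
      _ = ∫ u in (0:ℝ)..1, ((x 1 - x 0) * deriv x u + (y 1 - y 0) * deriv y u) := by
          rw [intervalIntegral.integral_add (hx'.const_mul _) (hy'.const_mul _),
            intervalIntegral.integral_const_mul, intervalIntegral.integral_const_mul,
            hx.integral_deriv_eq_sub, hy.integral_deriv_eq_sub]
      _ ≤ ∫ u in (0:ℝ)..1, D * √(deriv x u ^ 2 + deriv y u ^ 2) :=
          intervalIntegral.integral_mono_on zero_le_one
            ((hx'.const_mul _).add (hy'.const_mul _)) (hspeed.const_mul _)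
            fun u _ => mul_add_mul_le_sqrt_mul_sqrt _ _ _ _
      _ = D * sRLength3 γ := intervalIntegral.integral_const_mul _ _
  nlinarith [Real.sqrt_nonneg ((x 1 - x 0) ^ 2 + (y 1 - y 0) ^ 2)]

namespace IsFDCausal3

lemma abs_sub_snd_le_sub_fst (hγ : IsLipCurve3 γ) (hc : IsFDCausal3 γ) {s t : ℝ} (hs : 0 ≤ s)
    (hst : s ≤ t) (ht : t ≤ 1) : |(γ t).2.1 - (γ s).2.1| ≤ (γ t).1 - (γ s).1 :=
  AbsolutelyContinuousOnInterval.abs_sub_le_sub_of_abs_deriv_le hst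
    (hγ.absolutelyContinuousOnInterval_comp_s13 LipschitzWith.prod_fst ⟨hs, hst.trans ht⟩
      ⟨hs.trans hst, ht⟩)
    (hγ.absolutelyContinuousOnInterval_comp_s13 (LipschitzWith.prod_fst.comp LipschitzWith.prod_snd)
      ⟨hs, hst.trans ht⟩ ⟨hs.trans hst, ht⟩)
    (ae_restrict_of_ae_restrict_of_subset (Icc_subset_Icc hs ht) (hc.mono fun _ h => h.1))

lemma fst_mono (hγ : IsLipCurve3 γ) (hc : IsFDCausal3 γ) {s t : ℝ} (hs : 0 ≤ s) (hst : s ≤ t)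
    (ht : t ≤ 1) : (γ s).1 ≤ (γ t).1 :=
  sub_nonneg.mp ((abs_nonneg _).trans (hc.abs_sub_snd_le_sub_fst hγ hs hst ht))

lemma abs_snd_le_fst_of_zero (hγ : IsLipCurve3 γ) (hc : IsFDCausal3 γ) (h0 : γ 0 = (0, 0, 0))
    {t : ℝ} (ht : t ∈ Icc (0 : ℝ) 1) : |(γ t).2.1| ≤ (γ t).1 := by
  simpa [h0] using hc.abs_sub_snd_le_sub_fst hγ le_rfl ht.1 ht.2

lemma abs_trd_le_fst_sq_of_zero (hγ : IsLipCurve3 γ) (hh : Horizontal γ) (hc : IsFDCausal3 γ)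
    (h0 : γ 0 = (0, 0, 0)) : |(γ 1).2.2| ≤ (γ 1).1 ^ 2 := by
  set X := (γ 1).1
  have hbound : ∀ᵐ u ∂volume.restrict (Icc (0 : ℝ) 1),
      |deriv (fun s => (γ s).2.2) u| ≤ deriv (fun s => X * (γ s).1) u := by
    filter_upwards [hh, hc, ae_restrict_mem measurableSet_Icc] with u hzu hcu hu
    have hxu : 0 ≤ (γ u).1 := by simpa [h0] using hc.fst_mono hγ le_rfl hu.1 hu.2
    have := abs_sub_mul_le_of_abs_le hxu (hc.fst_mono hγ hu.1 hu.2 le_rfl)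
      (hc.abs_snd_le_fst_of_zero hγ h0 hu) hcu.1
    rw [deriv_const_mul_field, hzu, abs_div, abs_two]
    linarith
  have hx := hγ.absolutelyContinuousOnInterval_comp_s13 LipschitzWith.prod_fst
    (left_mem_Icc.mpr zero_le_one) (right_mem_Icc.mpr zero_le_one)
  have hz := hγ.absolutelyContinuousOnInterval_comp_s13
    (LipschitzWith.prod_snd.comp LipschitzWith.prod_snd)
    (left_mem_Icc.mpr zero_le_one) (right_mem_Icc.mpr zero_le_one)
  simpa [h0, sq] using (hx.const_mul X).abs_sub_le_sub_of_abs_deriv_le zero_le_one hz hbound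

end IsFDCausal3

end Curve

lemma CausalLE.fst_le {p q : ℝ × ℝ × ℝ} (h : CausalLE p q) : p.1 ≤ q.1 := by
  rcases h with rfl | ⟨γ, hγ, -, hc, rfl, rfl⟩
  · exact le_rfl
  · exact hc.fst_mono hγ le_rfl zero_le_one le_rfl

lemma CausalLE.abs_le_of_zero {r : ℝ × ℝ × ℝ} (h : CausalLE (0, 0, 0) r) :
    |r.2.1| ≤ r.1 ∧ |r.2.2| ≤ r.1 ^ 2 := by
  rcases h with rfl | ⟨γ, hγ, hh, hc, h0, rfl⟩
  · simp
  · exact ⟨hc.abs_snd_le_fst_of_zero hγ h0 (right_mem_Icc.mpr zero_le_one),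
      hc.abs_trd_le_fst_sq_of_zero hγ hh h0⟩

theorem causalDiamond_zero_subset_heisBox (q : ℝ × ℝ × ℝ) :
    causalDiamond (0, 0, 0) q ⊆ heisBox q.1 := by
  rintro r ⟨h0r, hrq⟩
  obtain ⟨hy, hz⟩ := h0r.abs_le_of_zero
  have hx : 0 ≤ r.1 := (abs_nonneg _).trans hy
  have hxq := hrq.fst_le
  rw [mem_heisBox_iff, abs_of_nonneg hx]
  exact ⟨hxq, hy.trans hxq, hz.trans (pow_le_pow_left₀ hx hxq 2)⟩

/- The perturbations `t - t²` and `t - 3t² + 2t³` of the segment vanish at both ends, the second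
one has mean zero so that the area swept is independent of `a`, and `k = 5b - 30c` makes that
area equal to `c`. -/
lemma exists_horizontal_curve (a b c : ℝ) :
    ∃ γ : ℝ → ℝ × ℝ × ℝ, IsLipCurve3 γ ∧ Horizontal γ ∧ γ 0 = (0, 0, 0) ∧ γ 1 = (a, b, c) := by
  set k := 5 * b - 30 * c
  refine ⟨fun t => (a * t + t - t ^ 2, b * t + k * (t - 3 * t ^ 2 + 2 * t ^ 3),
    (b / 6 - k / 3 - a * k / 2) * t ^ 3 + (k / 2 + a * k / 2) * t ^ 4 - k / 5 * t ^ 5),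
    IsLipCurve3.of_contDiff (by fun_prop), Eventually.of_forall fun t => ?_, by simp, ?_⟩
  · simp (disch := fun_prop)
    ring
  · simp only [Prod.mk.injEq]
    refine ⟨by ring, by ring, by ring⟩

theorem sqrt_le_sRDist (a b c : ℝ) : √(a ^ 2 + b ^ 2) ≤ sRDist (0, 0, 0) (a, b, c) := by
  obtain ⟨γ, hγ⟩ := exists_horizontal_curve a b c
  refine le_csInf ⟨_, γ, hγ, rfl⟩ ?_
  rintro _ ⟨γ, ⟨hγ, -, h0, h1⟩, rfl⟩
  simpa [h0, h1] using hγ.sqrt_le_sRLength3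

theorem diamond_subset_box_general (a b c : ℝ) :
    causalDiamond (0, 0, 0) (a, b, c) ⊆ heisBox a ∧
    (∀ γ : ℝ → ℝ × ℝ × ℝ, IsLipCurve3 γ → Horizontal γ →
      γ 0 = (0, 0, 0) → γ 1 = (a, b, c) →
      Real.sqrt (a^2 + b^2) ≤ sRLength3 γ) ∧
    causalDiamond (0, 0, 0) (a, b, c) ⊆ heisBox (sRDist (0, 0, 0) (a, b, c)) := by
  have hbox := causalDiamond_zero_subset_heisBox (a, b, c)
  have ha : a ≤ sRDist (0, 0, 0) (a, b, c) :=
    ((le_abs_self a).trans (Real.abs_le_sqrt (le_add_of_nonneg_right (sq_nonneg b)))).trans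
      (sqrt_le_sRDist a b c)
  refine ⟨hbox, fun γ hγ _ h0 h1 => ?_, hbox.trans (heisBox_mono ha)⟩
  simpa [h0, h1] using hγ.sqrt_le_sRLength3

/-- for `a ≥ 0`, the causal diamond `J(0,(a,b,c))` is contained in
the box `[−a,a] × [−a,a] × [−a²,a²]`; every horizontal Lipschitz curve from the
origin to `(a,b,c)` has sub-Riemannian length at least `√(a² + b²)`; consequently
`J(0,(a,b,c))` is contained in the box of size `d = d(0,(a,b,c))`. -/
theorem diamond_subset_box (a b c : ℝ) (ha : 0 ≤ a) :
    causalDiamond (0, 0, 0) (a, b, c) ⊆ heisBox a ∧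
    (∀ γ : ℝ → ℝ × ℝ × ℝ, IsLipCurve3 γ → Horizontal γ →
      γ 0 = (0, 0, 0) → γ 1 = (a, b, c) →
      Real.sqrt (a^2 + b^2) ≤ sRLength3 γ) ∧
    causalDiamond (0, 0, 0) (a, b, c) ⊆ heisBox (sRDist (0, 0, 0) (a, b, c)) :=
  diamond_subset_box_general a b c
end
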